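/- In the free associative superalgebra 'f over ℂ(q) with odd generator θₘ, equipped with the bilinear form C as above, one has C(θₘ², θₘ²) = 0; hence θₘ² = 0 holds in the quotient f = 'f / Ker(C). -/

import Mathlib

/-!
Because `θₘ` is odd and `⟨|θₘ|,|θₘ|⟩ = 0`, the two cross terms `θₘ ⊗ θₘ` of
`r(θₘ²) = r(θₘ) r(θₘ)` come with coefficients `1` and `-1` and cancel, so `θₘ²` is primitive:
`r(θₘ²) = θₘ² ⊗ 1 + 1 ⊗ θₘ²`. Hence `C(θₘ², θₘ θₘ) = C(θₘ², θₘ) C(1, θₘ) ± C(1, θₘ) C(θₘ², θₘ)`,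
which vanishes because `C` pairs different multidegrees trivially. The same orthogonality kills
the pairing of `θₘ²` with every other word, and words span `'f`.
-/

open TensorProduct
open scoped TensorProduct

noncomputable section

/-- The base field `ℂ(q)`. -/
abbrev Kq : Type := RatFunc ℂ

/-- The indeterminate `q`. -/
def qq : Kq := RatFunc.X

theorem FreeAlgebra.span_range_list_prod_ι {R X : Type*} [CommSemiring R] :
    Submodule.span R (Set.range fun L : List X => (L.map (FreeAlgebra.ι R)).prod) = ⊤ := by
  rw [eq_top_iff, ← Algebra.top_toSubmodule, ← adjoin_range_ι, Algebra.adjoin_eq_span]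
  refine Submodule.span_mono fun x hx => ?_
  induction hx using Submonoid.closure_induction with
  | mem _ h => obtain ⟨i, rfl⟩ := h; exact ⟨[i], by simp⟩
  | one => exact ⟨[], by simp⟩
  | mul _ _ _ _ h₁ h₂ =>
    obtain ⟨L₁, rfl⟩ := h₁
    obtain ⟨L₂, rfl⟩ := h₂
    exact ⟨L₁ ++ L₂, by simp⟩

theorem List.eq_replicate_of_toFinsupp_eq_single {X : Type*} [DecidableEq X] {L : List X}
    {a : X} {n : ℕ} (h : Multiset.toFinsupp (L : Multiset X) = Finsupp.single a n) :
    L = List.replicate n a := by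
  rw [Multiset.toFinsupp_eq_iff, Finsupp.toMultiset_single, Multiset.nsmul_singleton,
    ← Multiset.coe_replicate, Multiset.coe_eq_coe] at h
  exact List.perm_replicate.mp h

theorem List.prod_map_mem_grade {R X A : Type*} [CommSemiring R] [Semiring A] [Module R A]
    [DecidableEq X] (grF : (X →₀ ℕ) → Submodule R A) (f : X → A) (h1 : (1 : A) ∈ grF 0)
    (hf : ∀ i, f i ∈ grF (Finsupp.single i 1))
    (hmul : ∀ (ν μ : X →₀ ℕ) (x y : A), x ∈ grF ν → y ∈ grF μ → x * y ∈ grF (ν + μ))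
    (L : List X) : (L.map f).prod ∈ grF (Multiset.toFinsupp L) := by
  induction L with
  | nil => simpa using h1
  | cons a L ih =>
    rw [← Multiset.cons_coe, ← Multiset.singleton_add, Multiset.toFinsupp_add,
      Multiset.toFinsupp_singleton, List.map_cons, List.prod_cons]
    exact hmul _ _ _ _ (hf a) ih

theorem FreeAlgebra.linearMap_eq_zero_of_ne_grade {R X M : Type*} [CommSemiring R]
    [AddCommMonoid M] [Module R M] (grF : (X →₀ ℕ) → Submodule R (FreeAlgebra R X))
    (h1 : (1 : FreeAlgebra R X) ∈ grF 0)
    (hι : ∀ i, FreeAlgebra.ι R i ∈ grF (Finsupp.single i 1))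
    (hmul : ∀ (ν μ : X →₀ ℕ) (x y : FreeAlgebra R X), x ∈ grF ν → y ∈ grF μ →
      x * y ∈ grF (ν + μ))
    (f : FreeAlgebra R X →ₗ[R] M) (a : X) (n : ℕ)
    (hdeg : ∀ ν ≠ Finsupp.single a n, ∀ x ∈ grF ν, f x = 0)
    (hpow : f (FreeAlgebra.ι R a ^ n) = 0) : f = 0 := by
  classical
  refine LinearMap.ext_on_range FreeAlgebra.span_range_list_prod_ι fun L => ?_
  by_cases hL : Multiset.toFinsupp (L : Multiset X) = Finsupp.single a n
  · simpa [List.eq_replicate_of_toFinsupp_eq_single hL] using hpow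
  · exact hdeg _ hL _ (List.prod_map_mem_grade grF _ h1 hι hmul L)

section Twisted

variable {K A Γ : Type*} [Field K] [Ring A] [Algebra K A] [AddMonoid Γ]
  {grF : Γ → Submodule K A} {pardeg : Γ → ZMod 2} {pairdeg : Γ → Γ → ℤ}

theorem twistedMul_sq_of_odd_isotropic (q : K)
    (tm : A ⊗[K] A →ₗ[K] A ⊗[K] A →ₗ[K] A ⊗[K] A)
    (htm : ∀ (ν₁ ν₂ μ₁ μ₂ : Γ) (x₁ x₂ y₁ y₂ : A),
      x₁ ∈ grF ν₁ → x₂ ∈ grF ν₂ → y₁ ∈ grF μ₁ → y₂ ∈ grF μ₂ →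
      tm (x₁ ⊗ₜ[K] x₂) (y₁ ⊗ₜ[K] y₂) =
        (((-1 : K) ^ ((pardeg ν₂).val * (pardeg μ₁).val)) * q ^ (pairdeg ν₂ μ₁)) •
          ((x₁ * y₁) ⊗ₜ[K] (x₂ * y₂)))
    {x : A} {ν : Γ} (h1 : (1 : A) ∈ grF 0) (hx : x ∈ grF ν)
    (hp0 : pardeg 0 = 0) (hpν : pardeg ν = 1)
    (hq0 : ∀ μ, pairdeg 0 μ = 0) (hq0' : ∀ μ, pairdeg μ 0 = 0) (hqν : pairdeg ν ν = 0) :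
    tm (x ⊗ₜ 1 + 1 ⊗ₜ x) (x ⊗ₜ 1 + 1 ⊗ₜ x) = (x * x) ⊗ₜ 1 + 1 ⊗ₜ (x * x) := by
  simp only [map_add, LinearMap.add_apply, htm _ _ _ _ _ _ _ _ hx h1 hx h1,
    htm _ _ _ _ _ _ _ _ hx h1 h1 hx, htm _ _ _ _ _ _ _ _ h1 hx hx h1,
    htm _ _ _ _ _ _ _ _ h1 hx h1 hx, hp0, hpν, hq0, hq0', hqν, ZMod.val_zero, ZMod.val_one,
    mul_zero, mul_one, one_mul, pow_zero, pow_one, zpow_zero, one_smul, neg_smul]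
  abel

theorem pairing_mul_eq_zero_of_primitive
    (rc : A →ₗ[K] A ⊗[K] A) (C : A →ₗ[K] A →ₗ[K] K) (C2 : A ⊗[K] A →ₗ[K] A ⊗[K] A →ₗ[K] K)
    (hC2 : ∀ (ν μ : Γ) (x₁ x₂ y₁ y₂ : A), x₂ ∈ grF ν → y₁ ∈ grF μ →
      C2 (x₁ ⊗ₜ[K] x₂) (y₁ ⊗ₜ[K] y₂) =
        ((-1 : K) ^ ((pardeg ν).val * (pardeg μ).val)) * (C x₁ y₁ * C x₂ y₂))
    (hC_right : ∀ x y z : A, C x (y * z) = C2 (rc x) (y ⊗ₜ[K] z))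
    {x y z : A} {κ μ : Γ} (h1 : (1 : A) ∈ grF 0) (hx : x ∈ grF κ) (hy : y ∈ grF μ)
    (hprim : rc x = x ⊗ₜ 1 + 1 ⊗ₜ x) (hy1 : C 1 y = 0) (hz1 : C 1 z = 0) :
    C x (y * z) = 0 := by
  rw [hC_right, hprim, map_add, LinearMap.add_apply, hC2 _ _ _ _ _ _ h1 hy,
    hC2 _ _ _ _ _ _ hx hy, hy1, hz1]
  ring

end Twisted

theorem theta_m_squared_in_kernel_general
    (I : Type) (m : I)
    (pgen : I → ZMod 2) (hpm : pgen m = 1)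
    (dsym : I → ℤ) (cartanA : I → I → ℤ) (hamm : cartanA m m = 0)
    -- parity and pairing of multidegrees
    (pardeg : (I →₀ ℕ) → ZMod 2)
    (hpar : ∀ ν : I →₀ ℕ, pardeg ν = ∑ i ∈ ν.support, (ν i : ZMod 2) * pgen i)
    (pairdeg : (I →₀ ℕ) → (I →₀ ℕ) → ℤ)
    (hpair : ∀ ν μ : I →₀ ℕ, pairdeg ν μ =
      ∑ i ∈ ν.support, ∑ j ∈ μ.support, dsym i * cartanA i j * (ν i : ℤ) * (μ j : ℤ))
    -- the multidegree grading of the free algebra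
    (grF : (I →₀ ℕ) → Submodule Kq (FreeAlgebra Kq I))
    (hgr_one : (1 : FreeAlgebra Kq I) ∈ grF 0)
    (hgr_gen : ∀ i, FreeAlgebra.ι Kq i ∈ grF (Finsupp.single i 1))
    (hgr_mul : ∀ (ν μ : I →₀ ℕ) (x y : FreeAlgebra Kq I),
      x ∈ grF ν → y ∈ grF μ → x * y ∈ grF (ν + μ))
    -- the twisted multiplication on 'f ⊗ 'f
    (tm : FreeAlgebra Kq I ⊗[Kq] FreeAlgebra Kq I →ₗ[Kq]
      FreeAlgebra Kq I ⊗[Kq] FreeAlgebra Kq I →ₗ[Kq]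
      FreeAlgebra Kq I ⊗[Kq] FreeAlgebra Kq I)
    (htm_char : ∀ (ν₁ ν₂ μ₁ μ₂ : I →₀ ℕ) (x₁ x₂ y₁ y₂ : FreeAlgebra Kq I),
      x₁ ∈ grF ν₁ → x₂ ∈ grF ν₂ → y₁ ∈ grF μ₁ → y₂ ∈ grF μ₂ →
      tm (x₁ ⊗ₜ[Kq] x₂) (y₁ ⊗ₜ[Kq] y₂) =
        (((-1 : Kq) ^ ((pardeg ν₂).val * (pardeg μ₁).val)) * qq ^ (pairdeg ν₂ μ₁)) •
          ((x₁ * y₁) ⊗ₜ[Kq] (x₂ * y₂)))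
    -- the twisted comultiplication r
    (rc : FreeAlgebra Kq I →ₗ[Kq] FreeAlgebra Kq I ⊗[Kq] FreeAlgebra Kq I)
    (hrc_gen : ∀ i, rc (FreeAlgebra.ι Kq i) =
      FreeAlgebra.ι Kq i ⊗ₜ[Kq] (1 : FreeAlgebra Kq I) +
      (1 : FreeAlgebra Kq I) ⊗ₜ[Kq] FreeAlgebra.ι Kq i)
    (hrc_mul : ∀ x y : FreeAlgebra Kq I, rc (x * y) = tm (rc x) (rc y))
    -- the bilinear form C and its extension C2 to 'f ⊗ 'f
    (C : FreeAlgebra Kq I →ₗ[Kq] FreeAlgebra Kq I →ₗ[Kq] Kq)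
    (C2 : FreeAlgebra Kq I ⊗[Kq] FreeAlgebra Kq I →ₗ[Kq]
      FreeAlgebra Kq I ⊗[Kq] FreeAlgebra Kq I →ₗ[Kq] Kq)
    (hC2_char : ∀ (ν μ : I →₀ ℕ) (x₁ x₂ y₁ y₂ : FreeAlgebra Kq I),
      x₂ ∈ grF ν → y₁ ∈ grF μ →
      C2 (x₁ ⊗ₜ[Kq] x₂) (y₁ ⊗ₜ[Kq] y₂) =
        ((-1 : Kq) ^ ((pardeg ν).val * (pardeg μ).val)) * (C x₁ y₁ * C x₂ y₂))
    (hC_right : ∀ x y z : FreeAlgebra Kq I, C x (y * z) = C2 (rc x) (y ⊗ₜ[Kq] z))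
    (hC_deg : ∀ (ν μ : I →₀ ℕ), ν ≠ μ →
      ∀ x ∈ grF ν, ∀ y ∈ grF μ, C x y = 0) :
    C (FreeAlgebra.ι Kq m * FreeAlgebra.ι Kq m)
        (FreeAlgebra.ι Kq m * FreeAlgebra.ι Kq m) = 0 ∧
    (∀ y : FreeAlgebra Kq I,
      C (FreeAlgebra.ι Kq m * FreeAlgebra.ι Kq m) y = 0) ∧
    (∀ y : FreeAlgebra Kq I,
      C y (FreeAlgebra.ι Kq m * FreeAlgebra.ι Kq m) = 0) := by
  set θ := FreeAlgebra.ι Kq m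
  have hθ : θ ∈ grF (Finsupp.single m 1) := hgr_gen m
  have hθθ : θ * θ ∈ grF (Finsupp.single m 2) := by
    simpa [← Finsupp.single_add] using hgr_mul _ _ _ _ hθ hθ
  have hC1θ : C 1 θ = 0 :=
    hC_deg 0 _ (Finsupp.single_ne_zero.mpr one_ne_zero).symm 1 hgr_one θ hθ
  have hprim : rc (θ * θ) = (θ * θ) ⊗ₜ 1 + 1 ⊗ₜ (θ * θ) := by
    rw [hrc_mul, hrc_gen]
    exact twistedMul_sq_of_odd_isotropic qq tm htm_char hgr_one hθ (by simp [hpar])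
      (by simp [hpar, hpm]) (by simp [hpair]) (by simp [hpair]) (by simp [hpair, hamm])
  have hself : C (θ * θ) (θ * θ) = 0 :=
    pairing_mul_eq_zero_of_primitive rc C C2 hC2_char hC_right hgr_one hθθ hθ hprim hC1θ hC1θ
  have hleft : C (θ * θ) = 0 :=
    FreeAlgebra.linearMap_eq_zero_of_ne_grade grF hgr_one hgr_gen hgr_mul _ m 2
      (fun ν hν x hx => hC_deg _ _ hν.symm _ hθθ _ hx) (by rwa [sq])
  have hright : C.flip (θ * θ) = 0 :=
    FreeAlgebra.linearMap_eq_zero_of_ne_grade grF hgr_one hgr_gen hgr_mul _ m 2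
      (fun ν hν x hx => hC_deg _ _ hν _ hx _ hθθ) (by rwa [sq])
  exact ⟨hself, fun y => by rw [hleft]; rfl, fun y => LinearMap.congr_fun hright y⟩

/-- In the free associative superalgebra `'f` over `ℂ(q)` on
generators `θᵢ (i ∈ I)` with `θₘ` odd (`aₘₘ = 0` for the odd isotropic root,
so `⟨|θₘ|,|θₘ|⟩ = dₘaₘₘ = 0`), equipped with the bilinear form `C` determined
by `C(1,1) = 1`, `C(θₘ,θₘ) = 1`, `C(θᵢ,θⱼ) = 0` for `i ≠ j`,
`C(θᵢ,θᵢ) = (qᵢ − qᵢ⁻¹)⁻¹` for `i ≠ m`, and compatibility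
`C(x, yz) = C(r(x), y⊗z)` with the twisted comultiplication `r`, one has
`C(θₘ², θₘ²) = 0`; hence `θₘ² = 0` in the quotient `f = 'f / Ker(C)`
(equivalently, `θₘ²` pairs to zero with every element on both sides). -/
theorem theta_m_squared_in_kernel
    (I : Type) [DecidableEq I] (m : I)
    (pgen : I → ZMod 2) (hpm : pgen m = 1)
    (dsym : I → ℤ) (cartanA : I → I → ℤ) (hamm : cartanA m m = 0)
    -- parity and pairing of multidegrees
    (pardeg : (I →₀ ℕ) → ZMod 2)
    (hpar : ∀ ν : I →₀ ℕ, pardeg ν = ∑ i ∈ ν.support, (ν i : ZMod 2) * pgen i)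
    (pairdeg : (I →₀ ℕ) → (I →₀ ℕ) → ℤ)
    (hpair : ∀ ν μ : I →₀ ℕ, pairdeg ν μ =
      ∑ i ∈ ν.support, ∑ j ∈ μ.support, dsym i * cartanA i j * (ν i : ℤ) * (μ j : ℤ))
    -- the multidegree grading of the free algebra
    (grF : (I →₀ ℕ) → Submodule Kq (FreeAlgebra Kq I))
    (hgr_one : (1 : FreeAlgebra Kq I) ∈ grF 0)
    (hgr_gen : ∀ i, FreeAlgebra.ι Kq i ∈ grF (Finsupp.single i 1))
    (hgr_mul : ∀ (ν μ : I →₀ ℕ) (x y : FreeAlgebra Kq I),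
      x ∈ grF ν → y ∈ grF μ → x * y ∈ grF (ν + μ))
    (hgr_span : ∀ ν : I →₀ ℕ, grF ν ≤ Submodule.span Kq
      {w : FreeAlgebra Kq I | ∃ L : List I,
        w = (L.map (FreeAlgebra.ι Kq)).prod ∧ ∀ i, L.count i = ν i})
    -- the twisted multiplication on 'f ⊗ 'f
    (tm : FreeAlgebra Kq I ⊗[Kq] FreeAlgebra Kq I →ₗ[Kq]
      FreeAlgebra Kq I ⊗[Kq] FreeAlgebra Kq I →ₗ[Kq]
      FreeAlgebra Kq I ⊗[Kq] FreeAlgebra Kq I)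
    (htm_char : ∀ (ν₁ ν₂ μ₁ μ₂ : I →₀ ℕ) (x₁ x₂ y₁ y₂ : FreeAlgebra Kq I),
      x₁ ∈ grF ν₁ → x₂ ∈ grF ν₂ → y₁ ∈ grF μ₁ → y₂ ∈ grF μ₂ →
      tm (x₁ ⊗ₜ[Kq] x₂) (y₁ ⊗ₜ[Kq] y₂) =
        (((-1 : Kq) ^ ((pardeg ν₂).val * (pardeg μ₁).val)) * qq ^ (pairdeg ν₂ μ₁)) •
          ((x₁ * y₁) ⊗ₜ[Kq] (x₂ * y₂)))
    -- the twisted comultiplication r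
    (rc : FreeAlgebra Kq I →ₗ[Kq] FreeAlgebra Kq I ⊗[Kq] FreeAlgebra Kq I)
    (hrc_one : rc 1 = (1 : FreeAlgebra Kq I) ⊗ₜ[Kq] (1 : FreeAlgebra Kq I))
    (hrc_gen : ∀ i, rc (FreeAlgebra.ι Kq i) =
      FreeAlgebra.ι Kq i ⊗ₜ[Kq] (1 : FreeAlgebra Kq I) +
      (1 : FreeAlgebra Kq I) ⊗ₜ[Kq] FreeAlgebra.ι Kq i)
    (hrc_mul : ∀ x y : FreeAlgebra Kq I, rc (x * y) = tm (rc x) (rc y))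
    -- the bilinear form C and its extension C2 to 'f ⊗ 'f
    (C : FreeAlgebra Kq I →ₗ[Kq] FreeAlgebra Kq I →ₗ[Kq] Kq)
    (C2 : FreeAlgebra Kq I ⊗[Kq] FreeAlgebra Kq I →ₗ[Kq]
      FreeAlgebra Kq I ⊗[Kq] FreeAlgebra Kq I →ₗ[Kq] Kq)
    (hC2_char : ∀ (ν μ : I →₀ ℕ) (x₁ x₂ y₁ y₂ : FreeAlgebra Kq I),
      x₂ ∈ grF ν → y₁ ∈ grF μ →
      C2 (x₁ ⊗ₜ[Kq] x₂) (y₁ ⊗ₜ[Kq] y₂) =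
        ((-1 : Kq) ^ ((pardeg ν).val * (pardeg μ).val)) * (C x₁ y₁ * C x₂ y₂))
    (hC_one : C 1 1 = 1)
    (hC_gen : ∀ i j : I, C (FreeAlgebra.ι Kq i) (FreeAlgebra.ι Kq j) =
      if i = j then (if i = m then 1 else (qq ^ dsym i - (qq ^ dsym i)⁻¹)⁻¹) else 0)
    (hC_right : ∀ x y z : FreeAlgebra Kq I, C x (y * z) = C2 (rc x) (y ⊗ₜ[Kq] z))
    (hC_left : ∀ x y z : FreeAlgebra Kq I, C (x * y) z = C2 (x ⊗ₜ[Kq] y) (rc z))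
    (hC_deg : ∀ (ν μ : I →₀ ℕ), ν ≠ μ →
      ∀ x ∈ grF ν, ∀ y ∈ grF μ, C x y = 0) :
    C (FreeAlgebra.ι Kq m * FreeAlgebra.ι Kq m)
        (FreeAlgebra.ι Kq m * FreeAlgebra.ι Kq m) = 0 ∧
    (∀ y : FreeAlgebra Kq I,
      C (FreeAlgebra.ι Kq m * FreeAlgebra.ι Kq m) y = 0) ∧
    (∀ y : FreeAlgebra Kq I,
      C y (FreeAlgebra.ι Kq m * FreeAlgebra.ι Kq m) = 0) :=
  theta_m_squared_in_kernel_general I m pgen hpm dsym cartanA hamm pardeg hpar pairdeg hpair grF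
    hgr_one hgr_gen hgr_mul tm htm_char rc hrc_gen hrc_mul C C2 hC2_char hC_right hC_deg
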